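/- For any integer k ≥ 2, in the 2-player zero-sum game H2(k) on action sets {0,1,…,k−1} with Player 2's payoff u2(a2,a3) = 1 if a2 = a3, −1 if a2 ≡ a3 + 1 (mod k), and 0 otherwise (and u3 = −u2), the strategy profile in which each player plays each action with probability 1/k is the unique Nash equilibrium, and it yields payoff 0 to both players. -/

import Mathlib

open Finset

/-- Player 2's payoff in the 2-player zero-sum game H2(k):
1 if a2 = a3, −1 if a2 ≡ a3 + 1 (mod k), 0 otherwise. Player 3's payoff is its negation. -/
def H2pay (k : ℕ) (a b : Fin k) : ℝ :=
  if a = b then 1 else if (a : ℕ) = ((b : ℕ) + 1) % k then -1 else 0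

/-- A mixed strategy: a probability distribution on the actions. -/
def IsDist {α : Type} [Fintype α] (x : α → ℝ) : Prop :=
  (∀ i, 0 ≤ x i) ∧ ∑ i, x i = 1

/-- Expected payoff of Player 2 in H2(k). -/
noncomputable def H2E (k : ℕ) (x y : Fin k → ℝ) : ℝ :=
  ∑ a, ∑ b, x a * y b * H2pay k a b

/-- `(x,y)` is a Nash equilibrium of the zero-sum game H2(k):
Player 2 maximizes `H2E`, Player 3 (payoff −H2E) minimizes it. -/
def H2NE (k : ℕ) (x y : Fin k → ℝ) : Prop :=
  IsDist x ∧ IsDist y ∧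
  (∀ x', IsDist x' → H2E k x' y ≤ H2E k x y) ∧
  (∀ y', IsDist y' → H2E k x y ≤ H2E k x y')

/-!
Payoffs telescope along the cycle:
`H2E k x y = ∑ a, x a * (y a - y (a - 1)) = ∑ b, y b * (x b - x (b + 1))`.
At an equilibrium of value `v`, testing against pure strategies gives
`y a - y (a - 1) ≤ v ≤ x b - x (b + 1)` for all `a, b`. Both families of differences sum to `0`
around the cycle, so `v = 0` and every difference vanishes: `x` and `y` are shift-invariant, hence
constant, hence uniform. Conversely a constant strategy of either player makes every payoff `0`.
-/

lemma isDist_single {α : Type} [Fintype α] [DecidableEq α] (a : α) :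
    IsDist (Pi.single a (1 : ℝ)) :=
  ⟨fun i => by by_cases h : i = a <;> simp [h], by simp⟩

lemma isDist_uniform {α : Type} [Fintype α] [Nonempty α] :
    IsDist (fun _ : α => 1 / (Fintype.card α : ℝ)) :=
  ⟨fun _ => by positivity, by simp⟩

lemma IsDist.eq_uniform_of_const {α : Type} [Fintype α] {x : α → ℝ} (hx : IsDist x)
    (h : ∀ i j, x i = x j) :
    x = fun _ => 1 / (Fintype.card α : ℝ) := by
  funext i
  have hsum := hx.2
  rw [sum_congr rfl fun j _ => h j i, sum_const, card_univ, nsmul_eq_mul] at hsum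
  rw [eq_div_iff_mul_eq (left_ne_zero_of_mul_eq_one hsum), mul_comm, hsum]

open Fin.NatCast in
lemma Fin.apply_eq_apply_of_apply_add_one {k : ℕ} [NeZero k] {β : Type*} {f : Fin k → β}
    (h : ∀ a, f (a + 1) = f a) (i j : Fin k) : f i = f j := by
  have hcast : ∀ n : ℕ, f n = f 0 := by
    intro n
    induction n with
    | zero => simp
    | succ n ih => rw [Nat.cast_succ, h, ih]
  rw [← Fin.cast_val_eq_self i, ← Fin.cast_val_eq_self j, hcast, hcast]

lemma eq_zero_of_sum_eq_zero_of_le_of_le {ι : Type*} [Fintype ι] [Nonempty ι] {d e : ι → ℝ}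
    {v : ℝ} (hd : ∑ i, d i = 0) (he : ∑ i, e i = 0)
    (hdv : ∀ i, d i ≤ v) (hve : ∀ i, v ≤ e i) :
    d = 0 ∧ e = 0 := by
  have hv : v = 0 := by
    have h1 := sum_le_card_nsmul univ d v fun i _ => hdv i
    have h2 := card_nsmul_le_sum univ e v fun i _ => hve i
    rw [hd, nsmul_eq_mul] at h1
    rw [he, nsmul_eq_mul] at h2
    have hcard : (0 : ℝ) < #(univ : Finset ι) := by simp [Fintype.card_pos]
    nlinarith
  subst hv
  exact ⟨funext fun i => (sum_eq_zero_iff_of_nonpos fun i _ => hdv i).1 hd i (mem_univ i),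
    funext fun i => (sum_eq_zero_iff_of_nonneg fun i _ => hve i).1 he i (mem_univ i)⟩

lemma Fintype.sum_sub_comp_add_right {G M : Type*} [AddGroup G] [Fintype G] [AddCommGroup M]
    (f : G → M) (g : G) : ∑ a, (f a - f (a + g)) = 0 := by
  rw [sum_sub_distrib, ← Equiv.sum_comp (Equiv.addRight g) f]
  exact sub_self _

section

variable {k : ℕ} [NeZero k]

lemma H2pay_eq (hk : 2 ≤ k) (a b : Fin k) :
    H2pay k a b = (if a = b then 1 else 0) - (if a = b + 1 then 1 else 0) := by
  have hb : b ≠ b + 1 := by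
    simpa [eq_comm] using (by omega : k ≠ 1)
  have hval : ((b : ℕ) + 1) % k = ((b + 1 : Fin k) : ℕ) := by
    rw [Fin.val_add, Fin.val_one', Nat.add_mod_mod]
  unfold H2pay
  simp only [hval, Fin.val_eq_val]
  split_ifs <;> simp_all

lemma H2E_eq_sum_sub_sum (hk : 2 ≤ k) (x y : Fin k → ℝ) :
    H2E k x y = ∑ a, x a * y a - ∑ b, x (b + 1) * y b := by
  unfold H2E
  simp_rw [H2pay_eq hk, mul_sub, mul_ite, mul_one, mul_zero, sum_sub_distrib, sum_ite_eq]
  rw [sum_comm]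
  simp

lemma H2E_eq_sum_mul_sub_right (hk : 2 ≤ k) (x y : Fin k → ℝ) :
    H2E k x y = ∑ b, y b * (x b - x (b + 1)) := by
  simp_rw [H2E_eq_sum_sub_sum hk, mul_sub, sum_sub_distrib, mul_comm]

lemma H2E_eq_sum_mul_sub_left (hk : 2 ≤ k) (x y : Fin k → ℝ) :
    H2E k x y = ∑ a, x a * (y a - y (a - 1)) := by
  rw [H2E_eq_sum_sub_sum hk, ← (Equiv.subRight (1 : Fin k)).sum_comp (fun b => x (b + 1) * y b)]
  simp [mul_sub]

lemma H2E_single_left (hk : 2 ≤ k) (a : Fin k) (y : Fin k → ℝ) :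
    H2E k (Pi.single a 1) y = y a - y (a - 1) := by
  simp [H2E_eq_sum_mul_sub_left hk, Pi.single_apply]

lemma H2E_single_right (hk : 2 ≤ k) (x : Fin k → ℝ) (b : Fin k) :
    H2E k x (Pi.single b 1) = x b - x (b + 1) := by
  simp [H2E_eq_sum_mul_sub_right hk, Pi.single_apply]

lemma H2E_const_left (hk : 2 ≤ k) (c : ℝ) (y : Fin k → ℝ) : H2E k (fun _ => c) y = 0 := by
  simp [H2E_eq_sum_mul_sub_right hk]

lemma H2E_const_right (hk : 2 ≤ k) (x : Fin k → ℝ) (c : ℝ) : H2E k x (fun _ => c) = 0 := by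
  simp [H2E_eq_sum_mul_sub_left hk]

end

theorem stmt5 (k : ℕ) (hk : 2 ≤ k) :
    (∀ x y : Fin k → ℝ,
      H2NE k x y ↔ (x = fun _ => (1 : ℝ) / k) ∧ (y = fun _ => (1 : ℝ) / k)) ∧
    H2E k (fun _ => (1 : ℝ) / k) (fun _ => (1 : ℝ) / k) = 0 := by
  have : NeZero k := ⟨by omega⟩
  refine ⟨fun x y => ⟨fun ⟨hx, hy, hmax, hmin⟩ => ?_, ?_⟩, H2E_const_left hk _ _⟩
  · have hrow : ∀ a, y a - y (a - 1) ≤ H2E k x y := fun a => by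
      simpa [H2E_single_left hk] using hmax _ (isDist_single a)
    have hcol : ∀ b, H2E k x y ≤ x b - x (b + 1) := fun b => by
      simpa [H2E_single_right hk] using hmin _ (isDist_single b)
    obtain ⟨hy0, hx0⟩ := eq_zero_of_sum_eq_zero_of_le_of_le
      (by simpa only [← sub_eq_add_neg] using Fintype.sum_sub_comp_add_right y (-1))
      (Fintype.sum_sub_comp_add_right x 1) hrow hcol
    have hxshift : ∀ b, x (b + 1) = x b := fun b => (sub_eq_zero.1 (congr_fun hx0 b)).symm
    have hyshift : ∀ b, y (b + 1) = y b := fun b => by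
      simpa [sub_eq_zero] using congr_fun hy0 (b + 1)
    constructor
    · simpa using hx.eq_uniform_of_const (Fin.apply_eq_apply_of_apply_add_one hxshift)
    · simpa using hy.eq_uniform_of_const (Fin.apply_eq_apply_of_apply_add_one hyshift)
  · rintro ⟨rfl, rfl⟩
    have hunif : IsDist fun _ : Fin k => (1 : ℝ) / k := by
      simpa using isDist_uniform (α := Fin k)
    refine ⟨hunif, hunif, fun x' _ => ?_, fun y' _ => ?_⟩
    · simp [H2E_const_right hk]
    · simp [H2E_const_left hk]
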